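/- arXiv:2303.09009 — 5 statements merged into one kernel-verified Lean document; each statement's English description precedes it below -/
import Mathlib

section
/- Let μ > 0, let N be a real n×n skew-symmetric matrix, and let B be a real n×n matrix with N = B^sym − 2B, where B^sym = B + Bᵀ and L_{B^sym} = ‖B^sym‖ is the spectral norm of B^sym. Let x* solve (μI + N)x* = b. Suppose 0 < α < 1/L_{B^sym} and the sequence (x_k) satisfies the accelerated overrelaxation iteration (x_{k+1} − x_k)/α = −(μ x_{k+1} + B^sym x_k − 2B x_{k+1} − b). Then the Lyapunov function E^{αB}(x) = (1/2)‖x − x*‖²_{I − αB^sym} satisfies E^{αB}(x_{k+1}) ≤ (1 + αμ)^{−1} E^{αB}(x_k) for every k. Moreover, for the choice α = 1/(2L_{B^sym}), one has ‖x_k − x*‖² ≤ (1 + μ/(2L_{B^sym}))^{−k} · 3‖x_0 − x*‖² for all k. -/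
/-!
Write `S = B + Bᵀ`, `M = 1 - αS` and `eₖ = xₖ - x*`. Since `b = μx* + (S - 2B)x*`, the iteration
in error form reads `M (xₖ₊₁ - xₖ) = -α (μ eₖ₊₁ + S eₖ₊₁ - 2B eₖ₊₁)`, and pairing with `eₖ₊₁`
(where `⟨v, Bv⟩ = ½⟨v, Sv⟩` kills the last two terms) gives `⟨eₖ₊₁, M (xₖ₊₁ - xₖ)⟩ = -αμ‖eₖ₊₁‖²`.
For `α‖S‖ ≤ 1` the form `M` is positive semidefinite and `‖v‖²_M ≤ 2‖v‖²`, so the polarization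
identity `2⟨a, M(a - b)⟩ = ‖a‖²_M - ‖b‖²_M + ‖a - b‖²_M` yields `(1 + αμ)‖eₖ₊₁‖²_M ≤ ‖eₖ‖²_M`.
For `α = 1/(2‖S‖)` the `M`-norm lies between `½‖·‖²` and `³⁄₂‖·‖²`, whence the factor `3`.
-/

open Matrix

/-- The spectral norm (ℓ²-operator norm) of a real square matrix. -/
noncomputable def specNorm {n : ℕ} (M : Matrix (Fin n) (Fin n) ℝ) : ℝ :=
  ‖Matrix.toEuclideanCLM (𝕜 := ℝ) M‖

open scoped RealInnerProductSpace

theorem abs_dotProduct_mulVec_le_specNorm {n : ℕ} (M : Matrix (Fin n) (Fin n) ℝ)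
    (v : Fin n → ℝ) : |v ⬝ᵥ M *ᵥ v| ≤ specNorm M * (v ⬝ᵥ v) := by
  set x : EuclideanSpace ℝ (Fin n) := WithLp.toLp 2 v
  have hx : v ⬝ᵥ v = ‖x‖ ^ 2 := by
    rw [← real_inner_self_eq_norm_sq, EuclideanSpace.inner_toLp_toLp, star_trivial]
  calc |v ⬝ᵥ M *ᵥ v| = |⟪x, toEuclideanCLM (𝕜 := ℝ) M x⟫| := by
        rw [inner_toEuclideanCLM]
    _ ≤ ‖x‖ * ‖toEuclideanCLM (𝕜 := ℝ) M x‖ := abs_real_inner_le_norm _ _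
    _ ≤ ‖x‖ * (specNorm M * ‖x‖) := by gcongr; exact ContinuousLinearMap.le_opNorm _ _
    _ = specNorm M * (v ⬝ᵥ v) := by rw [hx]; ring

section DotProduct

variable {ι : Type*} [Fintype ι]

theorem dotProduct_mulVec_add_transpose_self (B : Matrix ι ι ℝ) (v : ι → ℝ) :
    v ⬝ᵥ (B + Bᵀ) *ᵥ v = 2 * (v ⬝ᵥ B *ᵥ v) := by
  rw [add_mulVec, dotProduct_add, mulVec_transpose, dotProduct_comm v (v ᵥ* B),
    ← dotProduct_mulVec]
  ring

theorem Matrix.IsSymm.two_mul_dotProduct_mulVec_sub {M : Matrix ι ι ℝ} (hM : M.IsSymm)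
    (a b : ι → ℝ) :
    2 * (a ⬝ᵥ M *ᵥ (a - b))
      = a ⬝ᵥ M *ᵥ a - b ⬝ᵥ M *ᵥ b + (a - b) ⬝ᵥ M *ᵥ (a - b) := by
  have hba : b ⬝ᵥ M *ᵥ a = a ⬝ᵥ M *ᵥ b := by
    rw [dotProduct_mulVec, ← mulVec_transpose, hM.eq, dotProduct_comm]
  simp only [mulVec_sub, dotProduct_sub, sub_dotProduct, hba]
  ring

theorem real_dotProduct_self_nonneg (v : ι → ℝ) : 0 ≤ v ⬝ᵥ v :=
  dotProduct_self_star_nonneg v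

theorem dotProduct_one_sub_smul_mulVec [DecidableEq ι] (S : Matrix ι ι ℝ) (α : ℝ)
    (v : ι → ℝ) :
    v ⬝ᵥ (1 - α • S) *ᵥ v = v ⬝ᵥ v - α * (v ⬝ᵥ S *ᵥ v) := by
  rw [sub_mulVec, one_mulVec, smul_mulVec, dotProduct_sub, dotProduct_smul, smul_eq_mul]

end DotProduct

section SpectralBounds

variable {n : ℕ} (S : Matrix (Fin n) (Fin n) ℝ) {α : ℝ}

theorem one_sub_mul_specNorm_mul_le_dotProduct (hα : 0 ≤ α) (v : Fin n → ℝ) :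
    (1 - α * specNorm S) * (v ⬝ᵥ v) ≤ v ⬝ᵥ (1 - α • S) *ᵥ v := by
  have h := (abs_le.mp (abs_dotProduct_mulVec_le_specNorm S v)).2
  rw [dotProduct_one_sub_smul_mulVec]
  nlinarith [mul_le_mul_of_nonneg_left h hα]

theorem dotProduct_le_one_add_mul_specNorm_mul (hα : 0 ≤ α) (v : Fin n → ℝ) :
    v ⬝ᵥ (1 - α • S) *ᵥ v ≤ (1 + α * specNorm S) * (v ⬝ᵥ v) := by
  have h := (abs_le.mp (abs_dotProduct_mulVec_le_specNorm S v)).1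
  rw [dotProduct_one_sub_smul_mulVec]
  nlinarith [mul_le_mul_of_nonneg_left h hα]

end SpectralBounds

section AOR

variable {ι : Type*} [Fintype ι] [DecidableEq ι] {μ α : ℝ} {B : Matrix ι ι ℝ} {b xs y y' : ι → ℝ}

theorem aor_step_error_eq (hxs : μ • xs + ((B + Bᵀ) - (2 : ℝ) • B) *ᵥ xs = b)
    (hstep : y' - y = -(α • (μ • y' + (B + Bᵀ) *ᵥ y - (2 : ℝ) • B *ᵥ y' - b))) :
    (1 - α • (B + Bᵀ)) *ᵥ (y' - y)
      = -(α • (μ • (y' - xs) + (B + Bᵀ) *ᵥ (y' - xs) - (2 : ℝ) • B *ᵥ (y' - xs))) := by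
  rw [sub_mulVec, one_mulVec, smul_mulVec, mulVec_sub _ y', hstep, ← hxs]
  simp only [mulVec_sub, sub_mulVec, smul_mulVec]
  module

theorem aor_step_energy_eq (hxs : μ • xs + ((B + Bᵀ) - (2 : ℝ) • B) *ᵥ xs = b)
    (hstep : y' - y = -(α • (μ • y' + (B + Bᵀ) *ᵥ y - (2 : ℝ) • B *ᵥ y' - b))) :
    (y' - xs) ⬝ᵥ (1 - α • (B + Bᵀ)) *ᵥ (y' - y) = -(α * μ) * ((y' - xs) ⬝ᵥ (y' - xs)) := by
  rw [aor_step_error_eq hxs hstep]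
  simp only [dotProduct_neg, dotProduct_smul, dotProduct_sub, dotProduct_add, smul_eq_mul,
    dotProduct_mulVec_add_transpose_self]
  ring

end AOR

section AORContraction

variable {n : ℕ} {μ α : ℝ} {B : Matrix (Fin n) (Fin n) ℝ} {b xs : Fin n → ℝ}

theorem aor_step_energy_contraction (hμ : 0 ≤ μ) (hα : 0 ≤ α)
    (hαL : α * specNorm (B + Bᵀ) ≤ 1) (hxs : μ • xs + ((B + Bᵀ) - (2 : ℝ) • B) *ᵥ xs = b)
    {y y' : Fin n → ℝ}
    (hstep : y' - y = -(α • (μ • y' + (B + Bᵀ) *ᵥ y - (2 : ℝ) • B *ᵥ y' - b))) :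
    (1 + α * μ) * ((y' - xs) ⬝ᵥ (1 - α • (B + Bᵀ)) *ᵥ (y' - xs))
      ≤ (y - xs) ⬝ᵥ (1 - α • (B + Bᵀ)) *ᵥ (y - xs) := by
  have hsymm : (1 - α • (B + Bᵀ)).IsSymm :=
    isSymm_one.sub ((isSymm_add_transpose_self B).smul α)
  have hpolar := hsymm.two_mul_dotProduct_mulVec_sub (y' - xs) (y - xs)
  rw [sub_sub_sub_cancel_right, aor_step_energy_eq hxs hstep] at hpolar
  have hdiff := one_sub_mul_specNorm_mul_le_dotProduct (B + Bᵀ) hα (y' - y)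
  have hnew := dotProduct_le_one_add_mul_specNorm_mul (B + Bᵀ) hα (y' - xs)
  have hαμ : 0 ≤ α * μ := mul_nonneg hα hμ
  have hgap : 0 ≤ (1 - α * specNorm (B + Bᵀ)) * ((y' - y) ⬝ᵥ (y' - y)) :=
    mul_nonneg (sub_nonneg.mpr hαL) (real_dotProduct_self_nonneg _)
  have hnew₂ : α * μ * ((y' - xs) ⬝ᵥ (1 - α • (B + Bᵀ)) *ᵥ (y' - xs))
      ≤ α * μ * (2 * ((y' - xs) ⬝ᵥ (y' - xs))) := by
    gcongr
    nlinarith [mul_le_mul_of_nonneg_right hαL (real_dotProduct_self_nonneg (y' - xs))]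
  linarith

theorem aor_energy_le_geom (hμ : 0 ≤ μ) (hα : 0 ≤ α) (hαL : α * specNorm (B + Bᵀ) ≤ 1)
    (hxs : μ • xs + ((B + Bᵀ) - (2 : ℝ) • B) *ᵥ xs = b) {x : ℕ → Fin n → ℝ}
    (hiter : ∀ k, x (k + 1) - x k =
      -(α • (μ • x (k + 1) + (B + Bᵀ) *ᵥ x k - (2 : ℝ) • B *ᵥ x (k + 1) - b))) (k : ℕ) :
    (x k - xs) ⬝ᵥ (1 - α • (B + Bᵀ)) *ᵥ (x k - xs)
      ≤ (1 + α * μ)⁻¹ ^ k * ((x 0 - xs) ⬝ᵥ (1 - α • (B + Bᵀ)) *ᵥ (x 0 - xs)) := by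
  have hpos : 0 < 1 + α * μ := by positivity
  refine le_geom (u := fun k ↦ (x k - xs) ⬝ᵥ (1 - α • (B + Bᵀ)) *ᵥ (x k - xs))
    (inv_nonneg.mpr hpos.le) k fun j _ ↦ ?_
  exact (le_inv_mul_iff₀ hpos).mpr (aor_step_energy_contraction hμ hα hαL hxs (hiter j))

end AORContraction

theorem aor_shifted_skew_symmetric_convergence_general
    {n : ℕ} (μ α : ℝ) (hμ : 0 < μ)
    (N B : Matrix (Fin n) (Fin n) ℝ)
    (hNB : N = (B + Bᵀ) - (2 : ℝ) • B)
    (b xs : Fin n → ℝ)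
    (hxs : μ • xs + N.mulVec xs = b)
    (hα0 : 0 < α) (hα1 : α < 1 / specNorm (B + Bᵀ))
    (x : ℕ → (Fin n → ℝ))
    (hiter : ∀ k, x (k + 1) - x k =
      -(α • (μ • x (k + 1) + (B + Bᵀ).mulVec (x k)
          - (2 : ℝ) • B.mulVec (x (k + 1)) - b))) :
    (∀ k, (1 / 2) * ((x (k + 1) - xs) ⬝ᵥ
            ((1 - α • (B + Bᵀ)).mulVec (x (k + 1) - xs)))
          ≤ (1 + α * μ)⁻¹ * ((1 / 2) * ((x k - xs) ⬝ᵥ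
            ((1 - α • (B + Bᵀ)).mulVec (x k - xs))))) ∧
    (α = 1 / (2 * specNorm (B + Bᵀ)) → ∀ k,
      (x k - xs) ⬝ᵥ (x k - xs)
        ≤ ((1 + μ / (2 * specNorm (B + Bᵀ)))⁻¹) ^ k
            * (3 * ((x 0 - xs) ⬝ᵥ (x 0 - xs)))) := by
  subst hNB
  set L := specNorm (B + Bᵀ)
  have hL : 0 < L := by
    by_contra! hL
    linarith [one_div_nonpos.mpr hL]
  have hαL : α * L ≤ 1 := ((lt_div_iff₀ hL).mp (by simpa using hα1)).le
  refine ⟨fun k ↦ ?_, fun hα k ↦ ?_⟩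
  · rw [le_inv_mul_iff₀ (by positivity)]
    linarith [aor_step_energy_contraction hμ.le hα0.le hαL hxs (hiter k)]
  · have hαL' : α * L = 1 / 2 := by rw [hα]; field_simp
    have hrate : 1 + μ / (2 * L) = 1 + α * μ := by rw [hα]; ring
    rw [hrate]
    calc (x k - xs) ⬝ᵥ (x k - xs)
        ≤ 2 * ((x k - xs) ⬝ᵥ (1 - α • (B + Bᵀ)) *ᵥ (x k - xs)) := by
          have h := one_sub_mul_specNorm_mul_le_dotProduct (B + Bᵀ) hα0.le (x k - xs)
          rw [hαL'] at h
          linarith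
      _ ≤ 2 * ((1 + α * μ)⁻¹ ^ k * ((x 0 - xs) ⬝ᵥ (1 - α • (B + Bᵀ)) *ᵥ (x 0 - xs))) := by
          gcongr
          exact aor_energy_le_geom hμ.le hα0.le hαL hxs hiter k
      _ ≤ 2 * ((1 + α * μ)⁻¹ ^ k * (3 / 2 * ((x 0 - xs) ⬝ᵥ (x 0 - xs)))) := by
          gcongr
          have h := dotProduct_le_one_add_mul_specNorm_mul (B + Bᵀ) hα0.le (x 0 - xs)
          rw [hαL'] at h
          linarith
      _ = (1 + α * μ)⁻¹ ^ k * (3 * ((x 0 - xs) ⬝ᵥ (x 0 - xs))) := by ring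

/-- **Linear convergence of the accelerated overrelaxation (AOR) method for the
shifted skew-symmetric system `(μI + N)x = b`.**  Here `N = Bˢʸᵐ - 2B` with
`Bˢʸᵐ = B + Bᵀ`, `L = ‖Bˢʸᵐ‖` the spectral norm, and the Lyapunov function is
`E(x) = ½‖x - x*‖²_{I - αBˢʸᵐ}`.  For `0 < α < 1/L` one has
`E(x_{k+1}) ≤ (1+αμ)⁻¹ E(x_k)`; moreover if `α = 1/(2L)` then
`‖x_k - x*‖² ≤ (1 + μ/(2L))⁻ᵏ · 3‖x_0 - x*‖²`. -/
theorem aor_shifted_skew_symmetric_convergence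
    {n : ℕ} (μ α : ℝ) (hμ : 0 < μ)
    (N B : Matrix (Fin n) (Fin n) ℝ)
    (hskew : Nᵀ = -N)
    (hNB : N = (B + Bᵀ) - (2 : ℝ) • B)
    (b xs : Fin n → ℝ)
    (hxs : μ • xs + N.mulVec xs = b)
    (hα0 : 0 < α) (hα1 : α < 1 / specNorm (B + Bᵀ))
    (x : ℕ → (Fin n → ℝ))
    (hiter : ∀ k, x (k + 1) - x k =
      -(α • (μ • x (k + 1) + (B + Bᵀ).mulVec (x k)
          - (2 : ℝ) • B.mulVec (x (k + 1)) - b))) :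
    (∀ k, (1 / 2) * ((x (k + 1) - xs) ⬝ᵥ
            ((1 - α • (B + Bᵀ)).mulVec (x (k + 1) - xs)))
          ≤ (1 + α * μ)⁻¹ * ((1 / 2) * ((x k - xs) ⬝ᵥ
            ((1 - α • (B + Bᵀ)).mulVec (x k - xs))))) ∧
    (α = 1 / (2 * specNorm (B + Bᵀ)) → ∀ k,
      (x k - xs) ⬝ᵥ (x k - xs)
        ≤ ((1 + μ / (2 * specNorm (B + Bᵀ)))⁻¹) ^ k
            * (3 * ((x 0 - xs) ⬝ᵥ (x 0 - xs)))) :=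
  aor_shifted_skew_symmetric_convergence_general μ α hμ N B hNB b xs hxs hα0 hα1 x hiter
end

section
/- (Strong Lyapunov property of the accelerated gradient flow.) Let F : ℝ^n → ℝ be differentiable with F ∈ S_μ, μ > 0, let N be a real n×n skew-symmetric matrix, and let x* satisfy ∇F(x*) + N x* = 0. Define the Lyapunov function E(x,y) = D_F(x, x*) + (μ/2)‖y − x*‖² and the vector field G(x,y) = (G^x, G^y) with G^x = y − x and G^y = x − y − (1/μ)(∇F(x) + N y). Then for all x, y ∈ ℝ^n, −⟨∇F(x) − ∇F(x*), G^x⟩ − μ⟨y − x*, G^y⟩ ≥ E(x,y) + (μ/2)‖y − x‖². -/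
/-!
Using `∇F(x*) = -N x*` and `⟨v, N v⟩ = 0` for `v = y - x*`, the left-hand side simplifies to
`⟨∇F(x) - ∇F(x*), x - x*⟩ + μ⟨y - x*, y - x⟩`. The first term is `D_F(x, x*) + D_F(x*, x)`,
and the polarization identity turns the second into
`(μ/2)(‖y - x*‖² + ‖y - x‖² - ‖x - x*‖²)`. What remains is `D_F(x*, x) ≥ (μ/2)‖x - x*‖²`,
which is the hypothesis `F ∈ S_μ`.
-/

open Matrix

/-- The continuous linear functional `v ↦ ⟨z, v⟩` on `ℝⁿ`. -/
noncomputable def dpCLM {m : ℕ} (z : Fin m → ℝ) : (Fin m → ℝ) →L[ℝ] ℝ :=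
  LinearMap.toContinuousLinearMap
    { toFun := fun v => z ⬝ᵥ v
      map_add' := fun a b => by simp [dotProduct_add]
      map_smul' := fun c a => by simp [dotProduct_smul] }

section
variable {ι R : Type*} [Fintype ι]

theorem Matrix.dotProduct_mulVec_self_eq_zero_of_transpose_eq_neg [CommRing R] [NoZeroDivisors R]
    [CharZero R] {N : Matrix ι ι R} (hN : Nᵀ = -N) (v : ι → R) : v ⬝ᵥ N *ᵥ v = 0 := by
  have h : v ⬝ᵥ N *ᵥ v = -(v ⬝ᵥ N *ᵥ v) := by
    conv_lhs => rw [dotProduct_mulVec, ← mulVec_transpose, hN, neg_mulVec, neg_dotProduct,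
      dotProduct_comm]
  exact self_eq_neg.mp h

theorem Matrix.two_mul_sub_dotProduct_sub [CommRing R] (a b c : ι → R) :
    2 * ((a - b) ⬝ᵥ (a - c)) = (a - b) ⬝ᵥ (a - b) + (a - c) ⬝ᵥ (a - c) - (b - c) ⬝ᵥ (b - c) := by
  simp only [sub_dotProduct, dotProduct_sub, dotProduct_comm b a, dotProduct_comm c a,
    dotProduct_comm c b]
  ring

def bregman [CommRing R] (F : (ι → R) → R) (gradF : (ι → R) → ι → R) (x y : ι → R) : R :=
  F x - F y - gradF y ⬝ᵥ (x - y)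

theorem bregman_add_bregman_swap [CommRing R] (F : (ι → R) → R) (gradF : (ι → R) → ι → R)
    (x y : ι → R) :
    bregman F gradF x y + bregman F gradF y x = (gradF x - gradF y) ⬝ᵥ (x - y) := by
  simp only [bregman, sub_dotProduct, dotProduct_sub]
  ring
end

theorem accelerated_flow_strong_lyapunov_general
    {n : ℕ} (μ : ℝ) (hμ : 0 < μ)
    (F : (Fin n → ℝ) → ℝ) (gradF : (Fin n → ℝ) → (Fin n → ℝ))
    (hlower : ∀ x y : Fin n → ℝ,
      μ / 2 * ((x - y) ⬝ᵥ (x - y)) ≤ F x - F y - gradF y ⬝ᵥ (x - y))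
    (N : Matrix (Fin n) (Fin n) ℝ) (hskew : Nᵀ = -N)
    (xs : Fin n → ℝ) (hxs : gradF xs + N.mulVec xs = 0) :
    ∀ x y : Fin n → ℝ,
      (F x - F xs - gradF xs ⬝ᵥ (x - xs)) + μ / 2 * ((y - xs) ⬝ᵥ (y - xs))
          + μ / 2 * ((y - x) ⬝ᵥ (y - x))
        ≤ -((gradF x - gradF xs) ⬝ᵥ (y - x))
          - μ * ((y - xs) ⬝ᵥ (x - y - (1 / μ) • (gradF x + N.mulVec y))) := by
  intro x y
  -- `∇F(x*) = -N x*` and skew-symmetry remove `N` from the `Gʸ` term entirely.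
  have hNy : N *ᵥ y = N *ᵥ (y - xs) - gradF xs := by
    rw [mulVec_sub, eq_neg_of_add_eq_zero_right hxs]; abel
  have hrate : -((gradF x - gradF xs) ⬝ᵥ (y - x))
      - μ * ((y - xs) ⬝ᵥ (x - y - (1 / μ) • (gradF x + N *ᵥ y)))
      = (gradF x - gradF xs) ⬝ᵥ (x - xs) + μ * ((y - xs) ⬝ᵥ (y - x)) := by
    simp only [hNy, dotProduct_sub, dotProduct_smul, dotProduct_add,
      dotProduct_mulVec_self_eq_zero_of_transpose_eq_neg hskew, smul_eq_mul, sub_dotProduct,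
      dotProduct_comm _ (gradF x), dotProduct_comm _ (gradF xs)]
    field_simp
    ring
  have hswap := bregman_add_bregman_swap F gradF x xs
  unfold bregman at hswap
  rw [hrate]
  linear_combination hlower xs x + hswap - μ / 2 * two_mul_sub_dotProduct_sub y xs x

/-- **Strong Lyapunov property of the accelerated gradient flow.**
For `F ∈ S_μ` (`μ > 0`) differentiable, `N` skew-symmetric, and `x*` with
`∇F(x*) + N x* = 0`, let `E(x,y) = D_F(x,x*) + (μ/2)‖y - x*‖²` and
`G = (y - x, x - y - (1/μ)(∇F(x) + Ny))`.  Then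
`-⟨∇F(x) - ∇F(x*), Gˣ⟩ - μ⟨y - x*, Gʸ⟩ ≥ E(x,y) + (μ/2)‖y - x‖²`. -/
theorem accelerated_flow_strong_lyapunov
    {n : ℕ} (μ : ℝ) (hμ : 0 < μ)
    (F : (Fin n → ℝ) → ℝ) (gradF : (Fin n → ℝ) → (Fin n → ℝ))
    (hdiff : ∀ x, HasFDerivAt F (dpCLM (gradF x)) x)
    (hlower : ∀ x y : Fin n → ℝ,
      μ / 2 * ((x - y) ⬝ᵥ (x - y)) ≤ F x - F y - gradF y ⬝ᵥ (x - y))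
    (N : Matrix (Fin n) (Fin n) ℝ) (hskew : Nᵀ = -N)
    (xs : Fin n → ℝ) (hxs : gradF xs + N.mulVec xs = 0) :
    ∀ x y : Fin n → ℝ,
      (F x - F xs - gradF xs ⬝ᵥ (x - xs)) + μ / 2 * ((y - xs) ⬝ᵥ (y - xs))
          + μ / 2 * ((y - x) ⬝ᵥ (y - x))
        ≤ -((gradF x - gradF xs) ⬝ᵥ (y - x))
          - μ * ((y - xs) ⬝ᵥ (x - y - (1 / μ) • (gradF x + N.mulVec y))) :=
  accelerated_flow_strong_lyapunov_general μ hμ F gradF hlower N hskew xs hxs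
end

section
/- Let F : ℝ^n → ℝ be differentiable with F ∈ S_{μ, L_F}, μ > 0, let N be a real n×n skew-symmetric matrix, and let x* satisfy ∇F(x*) + N x* = 0. Suppose the sequences (x_k), (y_k), (x̂_k) satisfy the IMEX scheme (x̂_{k+1} − x_k)/α_k = y_k − x̂_{k+1}, (y_{k+1} − y_k)/α_k = x̂_{k+1} − y_{k+1} − (1/μ)(∇F(x̂_{k+1}) + N y_{k+1}), (x_{k+1} − x_k)/α_k = y_{k+1} − x_{k+1}, with step sizes α_k > 0 satisfying α_k² L_F ≤ (1 + α_k) μ. Then E_{k+1} ≤ (1 + α_k)^{−1} E_k for every k, where E_k = D_F(x_k, x*) + (μ/2)‖y_k − x*‖². In particular, for the fixed step size α_k = √(μ/L_F), one has E_k ≤ (1 + √(μ/L_F))^{−k} E_0 and ‖x_k − x*‖² + ‖y_k − x*‖² ≤ (1 + √(μ/L_F))^{−k} · 2E_0/μ. -/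
open Matrix

/-!
Write `a = α_k`, `X, X' = x_k, x_{k+1}`, `Y, Y' = y_k, y_{k+1}` and `H = x̂_{k+1}`. The scheme gives
`(1+a) X' = X + a Y'`, so the three `S_{μ,L}` bounds of `F` around `H` (lower bounds towards `X`
and `x*`, upper bound towards `X'`) control `(1+a) D_F(X',x*) - D_F(X,x*)` up to the gradient
term `a ⟨∇F(H) - ∇F(x*), Y' - x*⟩`. Testing the `y`-update against `Y' - x*` produces the same
term with the opposite sign, while `N` drops out by skew-symmetry. What remains is
`(1+a) L/2 ‖X'-H‖² - μ/2 ‖Y'-Y‖²` plus nonpositive terms, and since `(1+a)(X'-H) = a(Y'-Y)` the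
step-size condition `a² L ≤ (1+a) μ` makes it nonpositive, i.e. `(1+a) E_{k+1} ≤ E_k`.
-/

namespace Imex

variable {ι : Type*} [Fintype ι]

def bregman (F : (ι → ℝ) → ℝ) (gradF : (ι → ℝ) → ι → ℝ) (x y : ι → ℝ) : ℝ :=
  F x - F y - gradF y ⬝ᵥ (x - y)

noncomputable def lyapunov (F : (ι → ℝ) → ℝ) (gradF : (ι → ℝ) → ι → ℝ) (μ : ℝ) (xs x y : ι → ℝ) : ℝ :=
  bregman F gradF x xs + μ / 2 * ((y - xs) ⬝ᵥ (y - xs))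

lemma dotProduct_self_nonneg (v : ι → ℝ) : 0 ≤ v ⬝ᵥ v := by
  simpa using dotProduct_self_star_nonneg v

lemma sub_dotProduct_sub_self_comm (u v : ι → ℝ) : (u - v) ⬝ᵥ (u - v) = (v - u) ⬝ᵥ (v - u) := by
  rw [← neg_sub v u, neg_dotProduct, dotProduct_neg, neg_neg]

lemma sub_dotProduct_sub_self (u v : ι → ℝ) :
    (u - v) ⬝ᵥ (u - v) = u ⬝ᵥ u - 2 * (u ⬝ᵥ v) + v ⬝ᵥ v := by
  simp only [sub_dotProduct, dotProduct_sub]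
  linear_combination dotProduct_comm u v

lemma mulVec_dotProduct_self_of_transpose_eq_neg {N : Matrix ι ι ℝ} (hN : Nᵀ = -N)
    (v : ι → ℝ) : N *ᵥ v ⬝ᵥ v = 0 := by
  have h : v ⬝ᵥ N *ᵥ v = -(N *ᵥ v ⬝ᵥ v) := by
    rw [dotProduct_mulVec, ← mulVec_transpose, hN, neg_mulVec, neg_dotProduct]
  linarith [dotProduct_comm v (N *ᵥ v)]

lemma mul_dotProduct_self_le_of_smul_eq {a L μ : ℝ} (ha : 0 < 1 + a) (hstep : a ^ 2 * L ≤ (1 + a) * μ)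
    {p q : ι → ℝ} (hpq : (1 + a) • p = a • q) : (1 + a) * (L * (p ⬝ᵥ p)) ≤ μ * (q ⬝ᵥ q) := by
  have hsq : (1 + a) ^ 2 * (p ⬝ᵥ p) = a ^ 2 * (q ⬝ᵥ q) := by
    have h := congrArg (fun w => w ⬝ᵥ w) hpq
    simp only [smul_dotProduct, dotProduct_smul, smul_eq_mul] at h
    linear_combination h
  have hq := mul_le_mul_of_nonneg_right hstep (dotProduct_self_nonneg q)
  refine le_of_mul_le_mul_left ?_ ha
  linear_combination L * hsq + hq

section Step

variable {F : (ι → ℝ) → ℝ} {gradF : (ι → ℝ) → ι → ℝ} {μ L : ℝ}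

lemma bregman_step_le
    (hlower : ∀ x y, μ / 2 * ((x - y) ⬝ᵥ (x - y)) ≤ bregman F gradF x y)
    (hupper : ∀ x y, bregman F gradF x y ≤ L / 2 * ((x - y) ⬝ᵥ (x - y)))
    {a : ℝ} (ha : 0 ≤ a) {xs X X' Y' H : ι → ℝ} (hX : X' - X = a • (Y' - X')) :
    (1 + a) * bregman F gradF X' xs - bregman F gradF X xs ≤
      a * ((gradF H - gradF xs) ⬝ᵥ (Y' - xs)) + (1 + a) * (L / 2 * ((X' - H) ⬝ᵥ (X' - H)))
        - μ / 2 * ((X - H) ⬝ᵥ (X - H)) - a * (μ / 2 * ((H - xs) ⬝ᵥ (H - xs))) := by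
  have hcomb : ∀ (w P : ι → ℝ), (1 + a) * (w ⬝ᵥ (X' - P)) - w ⬝ᵥ (X - P) - a * (w ⬝ᵥ (xs - P))
      = a * (w ⬝ᵥ (Y' - xs)) := fun w P => by
    have h : (1 + a) • (X' - P) - (X - P) - a • (xs - P) = a • (Y' - xs) := by
      linear_combination (norm := module) hX
    simpa only [dotProduct_sub, dotProduct_smul, smul_eq_mul] using congrArg (w ⬝ᵥ ·) h
  have hX_H := hlower X H
  have hxs_H := mul_le_mul_of_nonneg_left (hlower xs H) ha
  have hX'_H := hupper X' H
  have hgradH := hcomb (gradF H) H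
  have hgradxs := hcomb (gradF xs) xs
  rw [sub_self, dotProduct_zero, mul_zero, sub_zero] at hgradxs
  rw [sub_dotProduct_sub_self_comm xs H] at hxs_H
  simp only [bregman] at hX_H hxs_H hX'_H ⊢
  rw [sub_dotProduct]
  linear_combination hX_H + hxs_H + (1 + a) * hX'_H + hgradH - hgradxs

lemma sq_step_eq_of_implicit_update {N : Matrix ι ι ℝ} (hN : Nᵀ = -N) (hμ : μ ≠ 0) {a : ℝ}
    {u v h z : ι → ℝ} (he : u - v = a • (h - u - (1 / μ) • (z + N *ᵥ u))) :
    (1 + a) * (μ / 2 * (u ⬝ᵥ u)) - μ / 2 * (v ⬝ᵥ v) =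
      a * (μ / 2 * (h ⬝ᵥ h)) - a * (μ / 2 * ((h - u) ⬝ᵥ (h - u))) - a * (z ⬝ᵥ u)
        - μ / 2 * ((u - v) ⬝ᵥ (u - v)) := by
  have htest : μ * ((u - v) ⬝ᵥ u) = a * μ * ((h - u) ⬝ᵥ u) - a * (z ⬝ᵥ u) := by
    rw [he]
    simp only [smul_dotProduct, sub_dotProduct, add_dotProduct, smul_eq_mul,
      mulVec_dotProduct_self_of_transpose_eq_neg hN]
    field_simp
    ring
  rw [sub_dotProduct, sub_dotProduct] at htest
  linear_combination htest + μ / 2 * sub_dotProduct_sub_self u v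
    + a * μ / 2 * sub_dotProduct_sub_self h u - μ * dotProduct_comm u v

lemma lyapunov_succ_le (hμ : 0 < μ)
    (hlower : ∀ x y, μ / 2 * ((x - y) ⬝ᵥ (x - y)) ≤ bregman F gradF x y)
    (hupper : ∀ x y, bregman F gradF x y ≤ L / 2 * ((x - y) ⬝ᵥ (x - y)))
    {N : Matrix ι ι ℝ} (hN : Nᵀ = -N) {xs : ι → ℝ} (hxs : gradF xs + N *ᵥ xs = 0)
    {a : ℝ} (ha : 0 < a) (hstep : a ^ 2 * L ≤ (1 + a) * μ) {X X' Y Y' H : ι → ℝ}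
    (e1 : H - X = a • (Y - H))
    (e2 : Y' - Y = a • (H - Y' - (1 / μ) • (gradF H + N *ᵥ Y')))
    (e3 : X' - X = a • (Y' - X')) :
    lyapunov F gradF μ xs X' Y' ≤ (1 + a)⁻¹ * lyapunov F gradF μ xs X Y := by
  have hF := bregman_step_le hlower hupper ha.le (xs := xs) (H := H) e3
  have he : (Y' - xs) - (Y - xs) = a • ((H - xs) - (Y' - xs)
      - (1 / μ) • ((gradF H - gradF xs) + N *ᵥ (Y' - xs))) := by
    rw [mulVec_sub, eq_neg_of_add_eq_zero_right hxs, sub_sub_sub_cancel_right,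
      sub_sub_sub_cancel_right]
    convert e2 using 4
    abel
  have hY := sq_step_eq_of_implicit_update hN hμ.ne' he
  rw [sub_sub_sub_cancel_right, sub_sub_sub_cancel_right] at hY
  have hL := mul_dotProduct_self_le_of_smul_eq (by linarith) hstep (p := X' - H) (q := Y' - Y)
    (by linear_combination (norm := module) e3 - e1)
  have hXH := dotProduct_self_nonneg (X - H)
  have hHY := mul_nonneg ha.le (dotProduct_self_nonneg (H - Y'))
  rw [inv_mul_eq_div, le_div_iff₀ (by linarith), lyapunov, lyapunov]
  linear_combination hF + hY + hL / 2 + μ / 2 * hXH + μ / 2 * hHY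

lemma sq_dist_le_lyapunov (hlower : ∀ x y, μ / 2 * ((x - y) ⬝ᵥ (x - y)) ≤ bregman F gradF x y)
    (xs x y : ι → ℝ) :
    μ * ((x - xs) ⬝ᵥ (x - xs) + (y - xs) ⬝ᵥ (y - xs)) ≤ 2 * lyapunov F gradF μ xs x y := by
  unfold lyapunov
  linarith [hlower x xs]

end Step

end Imex

open Imex in
theorem imex_linear_convergence_general
    {n : ℕ} (μ LF : ℝ) (hμ : 0 < μ)
    (F : (Fin n → ℝ) → ℝ) (gradF : (Fin n → ℝ) → (Fin n → ℝ))
    (hlower : ∀ x y : Fin n → ℝ,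
      μ / 2 * ((x - y) ⬝ᵥ (x - y)) ≤ F x - F y - gradF y ⬝ᵥ (x - y))
    (hupper : ∀ x y : Fin n → ℝ,
      F x - F y - gradF y ⬝ᵥ (x - y) ≤ LF / 2 * ((x - y) ⬝ᵥ (x - y)))
    (N : Matrix (Fin n) (Fin n) ℝ) (hskew : Nᵀ = -N)
    (xs : Fin n → ℝ) (hxs : gradF xs + N.mulVec xs = 0)
    (α : ℕ → ℝ) (hα : ∀ k, 0 < α k) (hαstep : ∀ k, (α k) ^ 2 * LF ≤ (1 + α k) * μ)
    (x y xhat : ℕ → (Fin n → ℝ))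
    (hstep1 : ∀ k, xhat (k + 1) - x k = α k • (y k - xhat (k + 1)))
    (hstep2 : ∀ k, y (k + 1) - y k =
      α k • (xhat (k + 1) - y (k + 1)
        - (1 / μ) • (gradF (xhat (k + 1)) + N.mulVec (y (k + 1)))))
    (hstep3 : ∀ k, x (k + 1) - x k = α k • (y (k + 1) - x (k + 1))) :
    (∀ k,
      (F (x (k + 1)) - F xs - gradF xs ⬝ᵥ (x (k + 1) - xs))
          + μ / 2 * ((y (k + 1) - xs) ⬝ᵥ (y (k + 1) - xs))
        ≤ (1 + α k)⁻¹ *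
          ((F (x k) - F xs - gradF xs ⬝ᵥ (x k - xs))
            + μ / 2 * ((y k - xs) ⬝ᵥ (y k - xs)))) ∧
    ((∀ k, α k = Real.sqrt (μ / LF)) → ∀ k,
      ((F (x k) - F xs - gradF xs ⬝ᵥ (x k - xs))
          + μ / 2 * ((y k - xs) ⬝ᵥ (y k - xs))
        ≤ ((1 + Real.sqrt (μ / LF))⁻¹) ^ k *
          ((F (x 0) - F xs - gradF xs ⬝ᵥ (x 0 - xs))
            + μ / 2 * ((y 0 - xs) ⬝ᵥ (y 0 - xs)))) ∧
      ((x k - xs) ⬝ᵥ (x k - xs) + (y k - xs) ⬝ᵥ (y k - xs)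
        ≤ ((1 + Real.sqrt (μ / LF))⁻¹) ^ k *
          (2 * ((F (x 0) - F xs - gradF xs ⬝ᵥ (x 0 - xs))
            + μ / 2 * ((y 0 - xs) ⬝ᵥ (y 0 - xs))) / μ))) := by
  set E : ℕ → ℝ := fun k => lyapunov F gradF μ xs (x k) (y k)
  have hdecay (k : ℕ) : E (k + 1) ≤ (1 + α k)⁻¹ * E k :=
    lyapunov_succ_le hμ hlower hupper hskew hxs (hα k) (hαstep k) (hstep1 k) (hstep2 k) (hstep3 k)
  refine ⟨hdecay, fun hfix k => ?_⟩
  have hrate : E k ≤ (1 + Real.sqrt (μ / LF))⁻¹ ^ k * E 0 :=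
    le_geom (by positivity) k fun j _ => hfix j ▸ hdecay j
  refine ⟨hrate, ?_⟩
  have hdist : μ * ((x k - xs) ⬝ᵥ (x k - xs) + (y k - xs) ⬝ᵥ (y k - xs)) ≤ 2 * E k :=
    sq_dist_le_lyapunov hlower xs (x k) (y k)
  change _ ≤ _ * (2 * E 0 / μ)
  rw [← mul_div_assoc, le_div_iff₀ hμ]
  linarith

/-- **Accelerated linear convergence of the IMEX scheme.**
For `F ∈ S_{μ,L_F}` (`μ > 0`), `N` skew-symmetric, `∇F(x*) + Nx* = 0`, and the IMEX
iteration with steps `α_k > 0` satisfying `α_k² L_F ≤ (1+α_k)μ`, the Lyapunov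
function `E_k = D_F(x_k,x*) + (μ/2)‖y_k - x*‖²` satisfies `E_{k+1} ≤ (1+α_k)⁻¹E_k`;
in particular for `α_k = √(μ/L_F)` one gets `E_k ≤ (1+√(μ/L_F))⁻ᵏ E_0` and
`‖x_k - x*‖² + ‖y_k - x*‖² ≤ (1+√(μ/L_F))⁻ᵏ · 2E_0/μ`. -/
theorem imex_linear_convergence
    {n : ℕ} (μ LF : ℝ) (hμ : 0 < μ)
    (F : (Fin n → ℝ) → ℝ) (gradF : (Fin n → ℝ) → (Fin n → ℝ))
    (hdiff : ∀ x, HasFDerivAt F (dpCLM (gradF x)) x)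
    (hlower : ∀ x y : Fin n → ℝ,
      μ / 2 * ((x - y) ⬝ᵥ (x - y)) ≤ F x - F y - gradF y ⬝ᵥ (x - y))
    (hupper : ∀ x y : Fin n → ℝ,
      F x - F y - gradF y ⬝ᵥ (x - y) ≤ LF / 2 * ((x - y) ⬝ᵥ (x - y)))
    (N : Matrix (Fin n) (Fin n) ℝ) (hskew : Nᵀ = -N)
    (xs : Fin n → ℝ) (hxs : gradF xs + N.mulVec xs = 0)
    (α : ℕ → ℝ) (hα : ∀ k, 0 < α k) (hαstep : ∀ k, (α k) ^ 2 * LF ≤ (1 + α k) * μ)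
    (x y xhat : ℕ → (Fin n → ℝ))
    (hstep1 : ∀ k, xhat (k + 1) - x k = α k • (y k - xhat (k + 1)))
    (hstep2 : ∀ k, y (k + 1) - y k =
      α k • (xhat (k + 1) - y (k + 1)
        - (1 / μ) • (gradF (xhat (k + 1)) + N.mulVec (y (k + 1)))))
    (hstep3 : ∀ k, x (k + 1) - x k = α k • (y (k + 1) - x (k + 1))) :
    (∀ k,
      (F (x (k + 1)) - F xs - gradF xs ⬝ᵥ (x (k + 1) - xs))
          + μ / 2 * ((y (k + 1) - xs) ⬝ᵥ (y (k + 1) - xs))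
        ≤ (1 + α k)⁻¹ *
          ((F (x k) - F xs - gradF xs ⬝ᵥ (x k - xs))
            + μ / 2 * ((y k - xs) ⬝ᵥ (y k - xs)))) ∧
    ((∀ k, α k = Real.sqrt (μ / LF)) → ∀ k,
      ((F (x k) - F xs - gradF xs ⬝ᵥ (x k - xs))
          + μ / 2 * ((y k - xs) ⬝ᵥ (y k - xs))
        ≤ ((1 + Real.sqrt (μ / LF))⁻¹) ^ k *
          ((F (x 0) - F xs - gradF xs ⬝ᵥ (x 0 - xs))
            + μ / 2 * ((y 0 - xs) ⬝ᵥ (y 0 - xs)))) ∧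
      ((x k - xs) ⬝ᵥ (x k - xs) + (y k - xs) ⬝ᵥ (y k - xs)
        ≤ ((1 + Real.sqrt (μ / LF))⁻¹) ^ k *
          (2 * ((F (x 0) - F xs - gradF xs ⬝ᵥ (x 0 - xs))
            + μ / 2 * ((y 0 - xs) ⬝ᵥ (y 0 - xs))) / μ))) :=
  imex_linear_convergence_general μ LF hμ F gradF hlower hupper N hskew xs hxs α hα hαstep x y xhat
    hstep1 hstep2 hstep3
end

section
/- Let I_V be an m×m symmetric positive definite real matrix, I_Q an n×n symmetric positive definite real matrix, B ∈ ℝ^{n×m}, and μ_f, μ_g > 0. Let L_S > 0 be such that pᵀ B I_V^{−1} Bᵀ p ≤ L_S · pᵀ I_Q p for all p ∈ ℝ^n (e.g., L_S = λ_max(I_Q^{−1} B I_V^{−1} Bᵀ)). If 0 ≤ α ≤ √(μ_f μ_g/(4 L_S)), then the (m+n)×(m+n) block matrix [[μ_f I_V, −2α Bᵀ], [−2α B, μ_g I_Q]] is symmetric positive semidefinite. -/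
/-!
Since `μ_f I_V` is positive definite, the block matrix is positive semidefinite iff its Schur
complement `μ_g I_Q - (4α²/μ_f) B I_V⁻¹ Bᵀ` is. The hypothesis on `L_S` bounds the quadratic
form of `B I_V⁻¹ Bᵀ` by `L_S` times that of `I_Q`, and the constraint on `α` is exactly
`4 α² L_S ≤ μ_f μ_g`.
-/

open Matrix

lemma sq_mul_le_of_le_sqrt_div {a b c : ℝ} (ha : 0 ≤ a) (hb : 0 ≤ b) (h : a ≤ √(b / c)) :
    a ^ 2 * c ≤ b := by
  rcases le_or_gt c 0 with hc | hc
  · nlinarith [sq_nonneg a]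
  · rwa [Real.le_sqrt ha (div_nonneg hb hc.le), le_div_iff₀ hc] at h

lemma posSemidef_smul_sub_smul_of_dotProduct_le {n : Type*} [Fintype n]
    {P Q : Matrix n n ℝ} (hP : P.IsHermitian) (hQ : Q.PosSemidef) {L c d : ℝ}
    (hPQ : ∀ p, p ⬝ᵥ P *ᵥ p ≤ L * (p ⬝ᵥ Q *ᵥ p)) (hc : 0 ≤ c) (hcd : c * L ≤ d) :
    (d • Q - c • P).PosSemidef := by
  refine .of_dotProduct_mulVec_nonneg
    ((hQ.1.smul (IsSelfAdjoint.all d)).sub (hP.smul (IsSelfAdjoint.all c))) fun p => ?_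
  have hq : 0 ≤ p ⬝ᵥ Q *ᵥ p := by simpa using hQ.dotProduct_mulVec_nonneg p
  simp only [star_trivial, sub_mulVec, smul_mulVec, dotProduct_sub, dotProduct_smul, smul_eq_mul,
    sub_nonneg]
  calc c * (p ⬝ᵥ P *ᵥ p) ≤ c * L * (p ⬝ᵥ Q *ᵥ p) := by
        rw [mul_assoc]; exact mul_le_mul_of_nonneg_left (hPQ p) hc
    _ ≤ d * (p ⬝ᵥ Q *ᵥ p) := mul_le_mul_of_nonneg_right hcd hq

lemma posSemidef_fromBlocks_smul_neg_smul_iff {m n : Type*} [Fintype m] [DecidableEq m]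
    [Fintype n] {A : Matrix m m ℝ} (hA : A.PosDef) {s : ℝ} (hs : 0 < s) (t : ℝ)
    (C : Matrix n m ℝ) (D : Matrix n n ℝ) :
    (fromBlocks (s • A) (-(t • Cᵀ)) (-(t • C)) D).PosSemidef ↔
      (D - (t ^ 2 / s) • (C * A⁻¹ * Cᵀ)).PosSemidef := by
  have hsA : (s • A).PosDef := hA.smul hs
  let := hsA.isUnit.invertible
  have hinv : (s • A)⁻¹ = s⁻¹ • A⁻¹ :=
    inv_smul' A (Units.mk0 s hs.ne') ((isUnit_iff_isUnit_det A).mp hA.isUnit)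
  have hC : -(t • C) = (-(t • Cᵀ))ᴴ := by simp
  have hschur : D - (-(t • Cᵀ))ᴴ * (s • A)⁻¹ * -(t • Cᵀ) = D - (t ^ 2 / s) • (C * A⁻¹ * Cᵀ) := by
    rw [hinv, conjTranspose_eq_transpose_of_trivial]
    simp only [transpose_neg, transpose_smul, transpose_transpose, Matrix.neg_mul,
      Matrix.mul_neg, Matrix.smul_mul, Matrix.mul_smul, div_eq_mul_inv]
    module
  rw [hC, PosDef.fromBlocks₁₁ _ _ hsA, hschur]

theorem block_matrix_posSemidef_general
    {m n : ℕ}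
    (IV : Matrix (Fin m) (Fin m) ℝ) (IQ : Matrix (Fin n) (Fin n) ℝ)
    (hIV : IV.PosDef) (hIQ : IQ.PosDef)
    (B : Matrix (Fin n) (Fin m) ℝ)
    (μf μg LS α : ℝ) (hμf : 0 < μf) (hμg : 0 < μg)
    (hS : ∀ p : Fin n → ℝ,
      p ⬝ᵥ (B * IV⁻¹ * Bᵀ).mulVec p ≤ LS * (p ⬝ᵥ IQ.mulVec p))
    (hα0 : 0 ≤ α) (hα1 : α ≤ Real.sqrt (μf * μg / (4 * LS))) :
    (Matrix.fromBlocks (μf • IV) (-((2 * α) • Bᵀ)) (-((2 * α) • B)) (μg • IQ)).PosSemidef := by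
  rw [posSemidef_fromBlocks_smul_neg_smul_iff hIV hμf]
  have hBIB : (B * IV⁻¹ * Bᵀ).IsHermitian := by
    simpa using isHermitian_mul_mul_conjTranspose B hIV.1.inv
  refine posSemidef_smul_sub_smul_of_dotProduct_le hBIB hIQ.posSemidef hS (by positivity) ?_
  have hα : α ^ 2 * (4 * LS) ≤ μf * μg := sq_mul_le_of_le_sqrt_div hα0 (by positivity) hα1
  rw [div_mul_eq_mul_div, div_le_iff₀ hμf]
  linarith

/-- **Positive semidefiniteness of the block matrix `[[μ_f I_V, -2αBᵀ], [-2αB, μ_g I_Q]]`.**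
If `I_V, I_Q` are SPD, `pᵀ(B I_V⁻¹ Bᵀ)p ≤ L_S pᵀI_Q p` for all `p` with `L_S > 0`,
`μ_f, μ_g > 0`, and `0 ≤ α ≤ √(μ_f μ_g/(4L_S))`, then the block matrix is
symmetric positive semidefinite. -/
theorem block_matrix_posSemidef
    {m n : ℕ}
    (IV : Matrix (Fin m) (Fin m) ℝ) (IQ : Matrix (Fin n) (Fin n) ℝ)
    (hIV : IV.PosDef) (hIQ : IQ.PosDef)
    (B : Matrix (Fin n) (Fin m) ℝ)
    (μf μg LS α : ℝ) (hμf : 0 < μf) (hμg : 0 < μg) (hLS : 0 < LS)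
    (hS : ∀ p : Fin n → ℝ,
      p ⬝ᵥ (B * IV⁻¹ * Bᵀ).mulVec p ≤ LS * (p ⬝ᵥ IQ.mulVec p))
    (hα0 : 0 ≤ α) (hα1 : α ≤ Real.sqrt (μf * μg / (4 * LS))) :
    (Matrix.fromBlocks (μf • IV) (-((2 * α) • Bᵀ)) (-((2 * α) • B)) (μg • IQ)).PosSemidef :=
  block_matrix_posSemidef_general IV IQ hIV hIQ B μf μg LS α hμf hμg hS hα0 hα1
end

section
/- Let I_V be an m×m symmetric positive definite real matrix, I_Q an n×n symmetric positive definite real matrix, B ∈ ℝ^{n×m} of full rank n with m ≥ n, and μ_f, μ_g > 0. Set I_μ = diag(μ_f I_V, μ_g I_Q) and B^sym = [[0, Bᵀ], [B, 0]] ∈ ℝ^{(m+n)×(m+n)}, and let L_S = λ_max(I_Q^{−1} B I_V^{−1} Bᵀ). Then the largest absolute value among the generalized eigenvalues λ of the pencil B^sym x = λ I_μ x equals √(L_S/(μ_f μ_g)); i.e., the I_μ-operator norm of B^sym is √(L_S/(μ_f μ_g)). -/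
/-!
Write `x = (u, v)`. The pencil equation splits into `Bᵀ v = λ μ_f I_V u` and `B u = λ μ_g I_Q v`,
and eliminating `u` gives `B I_V⁻¹ Bᵀ v = λ² μ_f μ_g I_Q v`, with `v ≠ 0` as soon as `λ ≠ 0`;
hence `λ² μ_f μ_g ≤ L_S`. Conversely, for an eigenvector `p` of `L_S > 0` the same equations are
solved by `λ = √(L_S / (μ_f μ_g))` and `u = (λ μ_f)⁻¹ I_V⁻¹ Bᵀ p`. Since
`L_S ⟪p, I_Q p⟫ = ⟪Bᵀ p, I_V⁻¹ Bᵀ p⟫`, the case `L_S = 0` is exactly `Bᵀ p = 0`, where `(0, p)` is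
an eigenvector for `λ = 0`.
-/

open Matrix

section BlockPencil

variable {l m R : Type*} [Fintype l] [Fintype m]

theorem fromBlocks_zero_mulVec_eq_smul_iff [CommSemiring R] (A : Matrix l l R) (B : Matrix l m R)
    (C : Matrix m l R) (D : Matrix m m R) (lam : R) (u : l → R) (v : m → R) :
    fromBlocks 0 B C 0 *ᵥ Sum.elim u v = lam • fromBlocks A 0 0 D *ᵥ Sum.elim u v ↔
      B *ᵥ v = lam • A *ᵥ u ∧ C *ᵥ u = lam • D *ᵥ v := by
  have hsmul : lam • Sum.elim (A *ᵥ u) (D *ᵥ v) = Sum.elim (lam • A *ᵥ u) (lam • D *ᵥ v) := by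
    funext i; cases i <;> rfl
  simp [fromBlocks_mulVec, hsmul, Sum.elim_eq_iff]

variable [DecidableEq l] [CommRing R]

theorem mul_nonsing_inv_mul_mulVec_eq_smul {A : Matrix l l R} (hA : IsUnit A.det)
    {B : Matrix l m R} {C : Matrix m l R} {D : Matrix m m R} {a d : R} {u : l → R} {v : m → R}
    (h₁ : B *ᵥ v = a • A *ᵥ u) (h₂ : C *ᵥ u = d • D *ᵥ v) :
    (C * A⁻¹ * B) *ᵥ v = (a * d) • D *ᵥ v := by
  rw [← mulVec_mulVec, ← mulVec_mulVec, h₁, mulVec_smul, mulVec_mulVec, nonsing_inv_mul A hA,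
    one_mulVec, mulVec_smul, h₂, smul_smul]

theorem exists_mulVec_eq_smul_of_mul_nonsing_inv_mul {K : Type*} [Field K] {A : Matrix l l K}
    (hA : IsUnit A.det) {B : Matrix l m K} {C : Matrix m l K} {D : Matrix m m K} {a d : K}
    (ha : a ≠ 0) {v : m → K} (h : (C * A⁻¹ * B) *ᵥ v = (a * d) • D *ᵥ v) :
    ∃ u, B *ᵥ v = a • A *ᵥ u ∧ C *ᵥ u = d • D *ᵥ v := by
  refine ⟨a⁻¹ • A⁻¹ *ᵥ B *ᵥ v, ?_, ?_⟩
  · rw [mulVec_smul, mulVec_mulVec, mul_nonsing_inv A hA, one_mulVec, smul_smul,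
      mul_inv_cancel₀ ha, one_smul]
  · rw [mulVec_smul, mulVec_mulVec, mulVec_mulVec, h, smul_smul, ← mul_assoc,
      inv_mul_cancel₀ ha, one_mul]

theorem ne_zero_of_mulVec_eq_smul_mulVec {K : Type*} [Field K] {A : Matrix l l K}
    (hA : IsUnit A.det) {B : Matrix l m K} {a : K} (ha : a ≠ 0) {u : l → K} {v : m → K}
    (h : B *ᵥ v = a • A *ᵥ u) (huv : Sum.elim u v ≠ 0) : v ≠ 0 := by
  rintro rfl
  rw [mulVec_zero, eq_comm, smul_eq_zero, or_iff_right ha] at h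
  rw [eq_zero_of_mulVec_eq_zero (isUnit_iff_ne_zero.1 hA) h, Sum.elim_zero_zero] at huv
  exact huv rfl

end BlockPencil

section Congruence

variable {l m : Type*} [Fintype l] [Fintype m]

theorem dotProduct_mul_mul_transpose_mulVec {R : Type*} [CommSemiring R] (A : Matrix l l R)
    (B : Matrix m l R) (p : m → R) :
    p ⬝ᵥ (B * A * Bᵀ) *ᵥ p = (Bᵀ *ᵥ p) ⬝ᵥ A *ᵥ Bᵀ *ᵥ p := by
  rw [← mulVec_mulVec, ← mulVec_mulVec, dotProduct_mulVec, ← mulVec_transpose]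

theorem mul_dotProduct_mulVec_eq_of_mul_mul_transpose_mulVec_eq_smul {R : Type*} [CommSemiring R]
    {A : Matrix l l R} {B : Matrix m l R} {D : Matrix m m R} {p : m → R} {r : R}
    (h : (B * A * Bᵀ) *ᵥ p = r • D *ᵥ p) :
    r * (p ⬝ᵥ D *ᵥ p) = (Bᵀ *ᵥ p) ⬝ᵥ A *ᵥ Bᵀ *ᵥ p := by
  rw [← dotProduct_mul_mul_transpose_mulVec, h, dotProduct_smul, smul_eq_mul]

variable {A : Matrix l l ℝ} {B : Matrix m l ℝ} {D : Matrix m m ℝ} {p : m → ℝ} {r : ℝ}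

theorem pos_of_mul_mul_transpose_mulVec_eq_smul (hA : A.PosDef) (hD : D.PosSemidef)
    (h : (B * A * Bᵀ) *ᵥ p = r • D *ᵥ p) (hBp : Bᵀ *ᵥ p ≠ 0) : 0 < r := by
  have hBAB := hA.dotProduct_mulVec_pos hBp
  have hDp := hD.dotProduct_mulVec_nonneg p
  rw [star_trivial, ← mul_dotProduct_mulVec_eq_of_mul_mul_transpose_mulVec_eq_smul h] at hBAB
  rw [star_trivial] at hDp
  exact pos_of_mul_pos_left hBAB hDp

theorem eq_zero_of_mul_mul_transpose_mulVec_eq_smul (hD : D.PosDef) (hp : p ≠ 0)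
    (h : (B * A * Bᵀ) *ᵥ p = r • D *ᵥ p) (hBp : Bᵀ *ᵥ p = 0) : r = 0 := by
  have hquad := mul_dotProduct_mulVec_eq_of_mul_mul_transpose_mulVec_eq_smul h
  have hDp := hD.dotProduct_mulVec_pos hp
  rw [star_trivial] at hDp
  rw [hBp, mulVec_zero, dotProduct_zero, mul_eq_zero] at hquad
  exact hquad.resolve_right hDp.ne'

end Congruence

theorem block_skew_generalized_eigenvalue_norm_general
    {m n : ℕ}
    (IV : Matrix (Fin m) (Fin m) ℝ) (IQ : Matrix (Fin n) (Fin n) ℝ)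
    (hIV : IV.PosDef) (hIQ : IQ.PosDef)
    (B : Matrix (Fin n) (Fin m) ℝ)
    (μf μg LS : ℝ) (hμf : 0 < μf) (hμg : 0 < μg)
    (hLS : IsGreatest
      {r : ℝ | ∃ p : Fin n → ℝ, p ≠ 0 ∧
        (B * IV⁻¹ * Bᵀ).mulVec p = r • IQ.mulVec p} LS) :
    IsGreatest
      {r : ℝ | ∃ (lam : ℝ) (x : Fin m ⊕ Fin n → ℝ), x ≠ 0 ∧
        (Matrix.fromBlocks 0 Bᵀ B 0).mulVec x
          = lam • (Matrix.fromBlocks (μf • IV) 0 0 (μg • IQ)).mulVec x ∧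
        r = |lam|}
      (Real.sqrt (LS / (μf * μg))) := by
  have hIVdet : IsUnit IV.det := hIV.det_pos.ne'.isUnit
  have hblock (lam : ℝ) (u : Fin m → ℝ) (v : Fin n → ℝ) :
      fromBlocks 0 Bᵀ B 0 *ᵥ Sum.elim u v =
          lam • fromBlocks (μf • IV) 0 0 (μg • IQ) *ᵥ Sum.elim u v ↔
        Bᵀ *ᵥ v = (lam * μf) • IV *ᵥ u ∧ B *ᵥ u = (lam * μg) • IQ *ᵥ v := by
    simp only [fromBlocks_zero_mulVec_eq_smul_iff, smul_mulVec, smul_smul]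
  obtain ⟨p, hp0, hp⟩ := hLS.1
  have hne (u : Fin m → ℝ) : Sum.elim u p ≠ 0 := fun h => hp0 (funext fun i => congrFun h (.inr i))
  refine ⟨?_, ?_⟩
  · by_cases hBp : Bᵀ *ᵥ p = 0
    · have hLS0 : LS = 0 := eq_zero_of_mul_mul_transpose_mulVec_eq_smul hIQ hp0 hp hBp
      exact ⟨0, Sum.elim 0 p, hne 0, (hblock _ _ _).2 ⟨by simp [hBp], by simp⟩, by simp [hLS0]⟩
    · have hLSpos := pos_of_mul_mul_transpose_mulVec_eq_smul hIV.inv hIQ.posSemidef hp hBp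
      set s := √(LS / (μf * μg)) with hs
      have hspos : 0 < s := Real.sqrt_pos.2 (by positivity)
      have hsq : s * μf * (s * μg) = LS := by
        rw [mul_mul_mul_comm, ← sq, hs, Real.sq_sqrt (by positivity)]
        field_simp
      rw [← hsq] at hp
      obtain ⟨u, hu⟩ := exists_mulVec_eq_smul_of_mul_nonsing_inv_mul hIVdet (by positivity) hp
      exact ⟨s, Sum.elim u p, hne u, (hblock _ _ _).2 hu, (abs_of_pos hspos).symm⟩
  · rintro r ⟨lam, x, hx_ne, hx, rfl⟩
    rw [← Sum.elim_comp_inl_inr x] at hx_ne hx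
    obtain ⟨h1, h2⟩ := (hblock _ _ _).1 hx
    rcases eq_or_ne lam 0 with rfl | hlam
    · simp
    have hv := ne_zero_of_mulVec_eq_smul_mulVec hIVdet (mul_ne_zero hlam hμf.ne') h1 hx_ne
    have := hLS.2 ⟨_, hv, mul_nonsing_inv_mul_mulVec_eq_smul hIVdet h1 h2⟩
    exact Real.abs_le_sqrt ((le_div_iff₀ (by positivity)).2 (by linarith))

/-- **The `I_μ`-operator norm of the block skew-coupling matrix `Bˢʸᵐ`.**
With `I_μ = diag(μ_f I_V, μ_g I_Q)` and `Bˢʸᵐ = [[0, Bᵀ], [B, 0]]`, and `L_S` the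
largest generalized eigenvalue of the pencil `(B I_V⁻¹ Bᵀ, I_Q)` (i.e.
`λ_max(I_Q⁻¹ B I_V⁻¹ Bᵀ)`), the largest absolute value of a generalized eigenvalue
of the pencil `(Bˢʸᵐ, I_μ)` equals `√(L_S/(μ_f μ_g))`. -/
theorem block_skew_generalized_eigenvalue_norm
    {m n : ℕ} (hmn : n ≤ m)
    (IV : Matrix (Fin m) (Fin m) ℝ) (IQ : Matrix (Fin n) (Fin n) ℝ)
    (hIV : IV.PosDef) (hIQ : IQ.PosDef)
    (B : Matrix (Fin n) (Fin m) ℝ) (hrank : B.rank = n)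
    (μf μg LS : ℝ) (hμf : 0 < μf) (hμg : 0 < μg)
    (hLS : IsGreatest
      {r : ℝ | ∃ p : Fin n → ℝ, p ≠ 0 ∧
        (B * IV⁻¹ * Bᵀ).mulVec p = r • IQ.mulVec p} LS) :
    IsGreatest
      {r : ℝ | ∃ (lam : ℝ) (x : Fin m ⊕ Fin n → ℝ), x ≠ 0 ∧
        (Matrix.fromBlocks 0 Bᵀ B 0).mulVec x
          = lam • (Matrix.fromBlocks (μf • IV) 0 0 (μg • IQ)).mulVec x ∧
        r = |lam|}
      (Real.sqrt (LS / (μf * μg))) :=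
  block_skew_generalized_eigenvalue_norm_general IV IQ hIV hIQ B μf μg LS hμf hμg hLS
end
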